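/- arXiv:1004.5167 — 5 statements merged into one kernel-verified Lean document; each statement's English description precedes it below -/
import Mathlib

section
/- Let n ≥ 1 and let p = (x₁, …, xₙ) ∈ ℝⁿ, with image p̄ in the torus Tⁿ = ℝⁿ/ℤⁿ. Then the cyclic subgroup ℤp̄ = {k·p̄ : k ∈ ℤ} is dense in Tⁿ if and only if the real numbers 1, x₁, x₂, …, xₙ are linearly independent over ℚ. -/
open MeasureTheory Complex Filter Function Set
open scoped Real ComplexConjugate Topology

noncomputable section KroneckerAux

namespace KroneckerAux

instance : IsProbabilityMeasure (volume : Measure (AddCircle (1:ℝ))) :=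
  ⟨by rw [AddCircle.measure_univ]; simp⟩

variable {n : ℕ}

abbrev G (n : ℕ) := Fin n → AddCircle (1 : ℝ)

/-- The character of the torus attached to an integer vector. -/
def chi (m : Fin n → ℤ) : C(G n, ℂ) :=
  ⟨fun q => ∏ i, fourier (m i) (q i), by
    exact continuous_finset_prod _ fun i _ =>
      (fourier (m i)).continuous.comp (continuous_apply i)⟩

lemma chi_apply (m : Fin n → ℤ) (q : G n) : chi m q = ∏ i, fourier (m i) (q i) := rfl

lemma chi_zero : (chi (0 : Fin n → ℤ)) = 1 := by
  ext q; simp [chi_apply, fourier_zero]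

lemma chi_mul (m m' : Fin n → ℤ) : chi m * chi m' = chi (m + m') := by
  ext q
  simp only [ContinuousMap.mul_apply, chi_apply, ← Finset.prod_mul_distrib, Pi.add_apply]
  exact Finset.prod_congr rfl fun i _ => (fourier_add (m := m i) (n := m' i) (x := q i)).symm

lemma chi_star (m : Fin n → ℤ) : star (chi m) = chi (-m) := by
  ext q
  simp only [ContinuousMap.star_apply, chi_apply, Pi.neg_apply, star_def, map_prod]
  exact Finset.prod_congr rfl fun i _ => (fourier_neg (n := m i) (x := q i)).symm


/-- Value of the basic character `chi (Pi.single i 1)`. -/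
lemma chi_single (i : Fin n) (q : G n) :
    chi (Pi.single i 1) q = AddCircle.toCircle (q i) := by
  rw [chi_apply, Finset.prod_eq_single i]
  · rw [Pi.single_eq_same, fourier_one]
  · intro j _ hj
    rw [Pi.single_eq_of_ne hj, fourier_zero]
  · simp

/-- The star subalgebra generated by the characters. -/
def chiAlg (n : ℕ) : StarSubalgebra ℂ C(G n, ℂ) where
  toSubalgebra := Algebra.adjoin ℂ (range (chi (n := n)))
  star_mem' := by
    show Algebra.adjoin ℂ (range (chi (n := n))) ≤
      star (Algebra.adjoin ℂ (range (chi (n := n))))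
    refine Algebra.adjoin_le ?_
    rintro - ⟨m, rfl⟩
    exact Algebra.subset_adjoin ⟨-m, (chi_star m).symm⟩

lemma chiAlg_separatesPoints : (chiAlg n).SeparatesPoints := by
  intro x y hxy
  obtain ⟨i, hi⟩ := Function.ne_iff.mp hxy
  refine ⟨_, ⟨chi (Pi.single i 1), Algebra.subset_adjoin ⟨_, rfl⟩, rfl⟩, ?_⟩
  dsimp only
  rw [chi_single, chi_single]
  intro hxy'
  exact hi (AddCircle.injective_toCircle one_ne_zero (Subtype.coe_inj.mp hxy'))

lemma chiAlg_coe :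
    Subalgebra.toSubmodule (chiAlg n).toSubalgebra
      = Submodule.span ℂ (range (chi (n := n))) := by
  apply Algebra.adjoin_eq_span_of_subset
  refine Subset.trans ?_ Submodule.subset_span
  intro x hx
  refine Submonoid.closure_induction (fun _ => id) ⟨0, ?_⟩ ?_ hx
  · exact chi_zero
  · rintro - - - - ⟨m, rfl⟩ ⟨m', rfl⟩
    exact ⟨m + m', (chi_mul m m').symm⟩

lemma span_chi_closure_eq_top :
    (Submodule.span ℂ (range (chi (n := n)))).topologicalClosure = ⊤ := by
  rw [← chiAlg_coe]
  exact congr_arg (Subalgebra.toSubmodule <| StarSubalgebra.toSubalgebra ·)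
    (ContinuousMap.starSubalgebra_topologicalClosure_eq_top_of_separatesPoints _
      chiAlg_separatesPoints)


lemma integrable_cm (g : C(G n, ℂ)) : Integrable g (volume : Measure (G n)) :=
  g.continuous.integrable_of_hasCompactSupport (HasCompactSupport.of_compactSpace _)

lemma integral_fourier_eq_zero {j : ℤ} (hj : j ≠ 0) :
    ∫ x : AddCircle (1 : ℝ), fourier j x = 0 :=
  integral_eq_zero_of_add_right_eq_neg (fourier_add_half_inv_index hj one_pos)

lemma integral_chi_eq_zero {m : Fin n → ℤ} (hm : m ≠ 0) :
    ∫ q : G n, chi m q = 0 := by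
  have : ∫ q : G n, chi m q = ∏ i, ∫ x : AddCircle (1 : ℝ), fourier (m i) x := by
    simpa [chi_apply, volume_pi] using
      MeasureTheory.integral_fintype_prod_eq_prod
        (fun i (x : AddCircle (1 : ℝ)) => (fourier (m i) x : ℂ))
  rw [this]
  obtain ⟨i, hi⟩ := Function.ne_iff.mp hm
  exact Finset.prod_eq_zero (Finset.mem_univ i) (integral_fourier_eq_zero hi)

variable (p : Fin n → ℝ)

/-- The image of `p` in the torus. -/
def pbar : G n := fun i => ((p i : ℝ) : AddCircle (1 : ℝ))

/-- The value of the character `chi m` at the generator, as a complex exponential. -/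
def zval (m : Fin n → ℤ) : ℂ := Complex.exp (2 * π * Complex.I * ((∑ i, (m i : ℝ) * p i : ℝ) : ℂ))

lemma norm_zval (m : Fin n → ℤ) : ‖zval p m‖ = 1 := by
  rw [zval, show 2 * ↑π * Complex.I * ((∑ i, (m i : ℝ) * p i : ℝ) : ℂ)
      = ((2 * π * (∑ i, (m i : ℝ) * p i) : ℝ) : ℂ) * Complex.I by push_cast; ring]
  exact Complex.norm_exp_ofReal_mul_I _

lemma zval_eq_one_iff (m : Fin n → ℤ) :
    zval p m = 1 ↔ ∃ c : ℤ, (∑ i, (m i : ℝ) * p i) = c := by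
  rw [zval, Complex.exp_eq_one_iff]
  constructor
  · rintro ⟨c, hc⟩
    refine ⟨c, ?_⟩
    have h2 : (2 * ↑π * Complex.I : ℂ) ≠ 0 := by
      simp [Real.pi_ne_zero, Complex.I_ne_zero]
    have : ((∑ i, (m i : ℝ) * p i : ℝ) : ℂ) = (c : ℂ) := by
      apply mul_left_cancel₀ h2
      rw [hc]; ring
    exact_mod_cast this
  · rintro ⟨c, hc⟩
    exact ⟨c, by rw [hc]; push_cast; ring⟩

lemma chi_apply_zsmul_pbar (m : Fin n → ℤ) (k : ℤ) :
    chi m (k • pbar p) = zval p m ^ k := by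
  have hcoord : ∀ i : Fin n, (k • pbar p) i = (((k : ℝ) * p i : ℝ) : AddCircle (1 : ℝ)) := by
    intro i
    show k • (((p i : ℝ) : AddCircle (1 : ℝ))) = _
    rw [← QuotientAddGroup.mk_zsmul]
    norm_num
  rw [chi_apply]
  simp_rw [hcoord, fourier_coe_apply]
  rw [← Complex.exp_sum, zval, ← Complex.exp_int_mul]
  congr 1
  push_cast
  rw [Finset.mul_sum, Finset.mul_sum]
  exact Finset.sum_congr rfl fun i _ => by ring

/-- The Birkhoff averages along the orbit. -/
def orbitAvg (g : C(G n, ℂ)) (N : ℕ) : ℂ :=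
  (N : ℂ)⁻¹ * ∑ k ∈ Finset.range N, g ((k : ℤ) • pbar p)

lemma tendsto_orbitAvg
    (hind : ∀ m : Fin n → ℤ, m ≠ 0 → ¬ ∃ c : ℤ, (∑ i, (m i : ℝ) * p i) = c)
    {g : C(G n, ℂ)} (hg : g ∈ Submodule.span ℂ (range (chi (n := n)))) :
    Tendsto (orbitAvg p g) atTop (𝓝 (∫ q : G n, g q)) := by
  induction hg using Submodule.span_induction with
  | mem x hx =>
      obtain ⟨m, rfl⟩ := hx
      by_cases hm : m = 0
      · subst hm
        rw [chi_zero]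
        have hint : ∫ q : G n, (1 : C(G n, ℂ)) q = 1 := by
          simp [ContinuousMap.one_apply]
        rw [hint]
        have : ∀ᶠ N in atTop, (fun _ : ℕ => (1 : ℂ)) N = orbitAvg p 1 N := by
          filter_upwards [eventually_ge_atTop 1] with N hN
          have hN' : (N : ℂ) ≠ 0 := Nat.cast_ne_zero.mpr (by omega)
          simp [orbitAvg, ContinuousMap.one_apply, hN']
        exact Tendsto.congr' this tendsto_const_nhds
      · rw [integral_chi_eq_zero hm]
        set z := zval p m with hz
        have hz1 : z ≠ 1 := fun h => hind m hm ((zval_eq_one_iff p m).mp h)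
        have hzn : ‖z‖ = 1 := norm_zval p m
        have havg : ∀ N : ℕ, orbitAvg p (chi m) N = (N : ℂ)⁻¹ * ((z ^ N - 1) / (z - 1)) := by
          intro N
          rw [orbitAvg]
          congr 1
          rw [← geom_sum_eq hz1 N]
          exact Finset.sum_congr rfl fun k _ => by
            rw [chi_apply_zsmul_pbar p m (k : ℤ), zpow_natCast]
        apply squeeze_zero_norm (a := fun N : ℕ => 2 / ‖z - 1‖ / N)
        · intro N
          rw [havg, norm_mul, norm_inv, norm_div, Complex.norm_natCast,
            inv_mul_eq_div, div_div, div_div]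
          have h2 : ‖z ^ N - 1‖ ≤ 2 := by
            calc ‖z ^ N - 1‖ ≤ ‖z ^ N‖ + ‖(1 : ℂ)‖ := norm_sub_le _ _
              _ = 2 := by rw [norm_pow, hzn, one_pow, norm_one]; norm_num
          gcongr
        · exact tendsto_const_div_atTop_nhds_zero_nat _
  | zero =>
      have : orbitAvg p 0 = fun _ => 0 := by
        funext N; simp [orbitAvg]
      rw [this]
      simp only [ContinuousMap.zero_apply, integral_zero]
      exact tendsto_const_nhds
  | add x y hx hy ihx ihy =>
      have : orbitAvg p (x + y) = fun N => orbitAvg p x N + orbitAvg p y N := by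
        funext N
        simp [orbitAvg, Finset.sum_add_distrib, mul_add]
      have hint : ∫ q : G n, (x + y) q = (∫ q : G n, x q) + ∫ q : G n, y q := by
        simp only [ContinuousMap.add_apply]
        exact integral_add (integrable_cm x) (integrable_cm y)
      rw [this, hint]
      exact ihx.add ihy
  | smul a x hx ihx =>
      have : orbitAvg p (a • x) = fun N => a * orbitAvg p x N := by
        funext N
        simp only [orbitAvg, ContinuousMap.smul_apply, smul_eq_mul, Finset.mul_sum]
        exact Finset.sum_congr rfl fun k _ => by ring
      rw [this]
      have : ∫ q : G n, (a • x) q = a * ∫ q : G n, x q := by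
        simp only [ContinuousMap.smul_apply, smul_eq_mul]
        rw [← integral_const_mul]
      rw [this]
      exact ihx.const_mul a


lemma dense_of_forall_sum_not_int
    (hind : ∀ m : Fin n → ℤ, m ≠ 0 → ¬ ∃ c : ℤ, (∑ i, (m i : ℝ) * p i) = c) :
    Dense {q : G n | ∃ k : ℤ, q = k • pbar p} := by
  by_contra hdense
  set S := {q : G n | ∃ k : ℤ, q = k • pbar p} with hS
  rw [Dense] at hdense
  push_neg at hdense
  obtain ⟨q₀, hq₀⟩ := hdense
  obtain ⟨f, hf0, hf1, hf01⟩ := exists_continuous_zero_one_of_isClosed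
    isClosed_closure (isClosed_singleton (x := q₀))
    (Set.disjoint_singleton_right.mpr hq₀)
  have hfnn : 0 ≤ (f : G n → ℝ) := fun x => (hf01 x).1
  have hfint : Integrable (f : G n → ℝ) volume :=
    f.continuous.integrable_of_hasCompactSupport (HasCompactSupport.of_compactSpace _)
  have hfq₀ : f q₀ = 1 := hf1 rfl
  have hI : 0 < ∫ x : G n, f x :=
    integral_pos_of_integrable_nonneg_nonzero f.continuous hfint hfnn
      (by rw [hfq₀]; norm_num)
  set I := ∫ x : G n, f x with hIdef
  set ε := I / 3 with hεdef
  have hεpos : 0 < ε := by positivity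
  set F : C(G n, ℂ) := ⟨fun x => ((f x : ℝ) : ℂ), Complex.continuous_ofReal.comp f.continuous⟩
    with hF
  have hFint : ∫ q : G n, F q = ((I : ℝ) : ℂ) := integral_ofReal
  have hFS : ∀ k : ℤ, F (k • pbar p) = 0 := by
    intro k
    have : f (k • pbar p) = 0 := hf0 (subset_closure ⟨k, rfl⟩)
    simp [hF, this]
  have hFmem : F ∈ closure ((Submodule.span ℂ (range (chi (n := n)))) : Set C(G n, ℂ)) := by
    rw [← Submodule.topologicalClosure_coe, span_chi_closure_eq_top]
    simp
  obtain ⟨g, hgspan, hgdist⟩ := Metric.mem_closure_iff.mp hFmem ε hεpos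
  have hpt : ∀ x : G n, ‖g x - F x‖ < ε := by
    intro x
    refine lt_of_le_of_lt ?_ hgdist
    rw [← dist_eq_norm, dist_comm]
    exact ContinuousMap.dist_apply_le_dist x
  have havg : ∀ N : ℕ, ‖orbitAvg p g N‖ ≤ ε := by
    intro N
    rw [orbitAvg, norm_mul, norm_inv, Complex.norm_natCast]
    rcases Nat.eq_zero_or_pos N with h0 | hNpos
    · subst h0; simp; positivity
    · have hsum : ‖∑ k ∈ Finset.range N, g ((k : ℤ) • pbar p)‖ ≤ N * ε := by
        calc ‖∑ k ∈ Finset.range N, g ((k : ℤ) • pbar p)‖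
            ≤ ∑ k ∈ Finset.range N, ‖g ((k : ℤ) • pbar p)‖ := norm_sum_le _ _
          _ ≤ ∑ _k ∈ Finset.range N, ε := by
              refine Finset.sum_le_sum fun k _ => ?_
              have h := hpt ((k : ℤ) • pbar p)
              rw [hFS k, sub_zero] at h
              exact h.le
          _ = N * ε := by rw [Finset.sum_const, Finset.card_range, nsmul_eq_mul]
      calc (N : ℝ)⁻¹ * ‖∑ k ∈ Finset.range N, g ((k : ℤ) • pbar p)‖
          ≤ (N : ℝ)⁻¹ * (N * ε) := by gcongr
        _ = ε := by
            have : (N : ℝ) ≠ 0 := Nat.cast_ne_zero.mpr hNpos.ne'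
            field_simp
  have hlim := tendsto_orbitAvg p hind hgspan
  have hgI : ‖∫ q : G n, g q‖ ≤ ε :=
    le_of_tendsto hlim.norm (Filter.Eventually.of_forall havg)
  have hdiff : ‖(∫ q : G n, F q) - ∫ q : G n, g q‖ ≤ ε := by
    rw [← integral_sub (integrable_cm F) (integrable_cm g)]
    have hb : ∀ᵐ x : G n ∂volume, ‖F x - g x‖ ≤ ε :=
      Filter.Eventually.of_forall fun x => by rw [norm_sub_rev]; exact (hpt x).le
    have := norm_integral_le_of_norm_le_const hb
    simpa [measure_univ] using this
  have hIF : ‖∫ q : G n, F q‖ = I := by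
    rw [hFint, Complex.norm_real]
    exact abs_of_pos hI
  have hfinal : I ≤ 2 * ε := by
    calc I = ‖∫ q : G n, F q‖ := hIF.symm
      _ = ‖((∫ q : G n, F q) - ∫ q : G n, g q) + ∫ q : G n, g q‖ := by ring_nf
      _ ≤ ‖(∫ q : G n, F q) - ∫ q : G n, g q‖ + ‖∫ q : G n, g q‖ := norm_add_le _ _
      _ ≤ ε + ε := add_le_add hdiff hgI
      _ = 2 * ε := by ring
  rw [hεdef] at hfinal
  linarith

end KroneckerAux
end KroneckerAux

open KroneckerAux Complex Function in
/-- For `n ≥ 1` and `p = (x₁, …, xₙ) ∈ ℝⁿ` with image `p̄` in the torus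
`Tⁿ = ℝⁿ/ℤⁿ`, the cyclic subgroup `ℤp̄ = {k • p̄ : k ∈ ℤ}` is dense in `Tⁿ` if and only if
`1, x₁, …, xₙ` are linearly independent over `ℚ`. -/
theorem zmultiples_dense_iff_linearIndependent
    (n : ℕ) (hn : 1 ≤ n) (p : Fin n → ℝ) :
    Dense {q : Fin n → AddCircle (1 : ℝ) |
        ∃ k : ℤ, q = k • (fun i => ((p i : ℝ) : AddCircle (1 : ℝ)))} ↔
      LinearIndependent ℚ (Fin.cons (1 : ℝ) p : Fin (n + 1) → ℝ) := by
  rw [← LinearIndependent.iff_fractionRing ℤ ℚ]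
  have hSeq : {q : Fin n → AddCircle (1 : ℝ) |
      ∃ k : ℤ, q = k • (fun i => ((p i : ℝ) : AddCircle (1 : ℝ)))}
      = {q : G n | ∃ k : ℤ, q = k • pbar p} := rfl
  rw [hSeq]
  constructor
  · -- dense → linearly independent
    intro hdense
    by_contra hli
    obtain ⟨g, hsum, i₀, hgi₀⟩ := Fintype.not_linearIndependent_iff.mp hli
    set c : ℤ := g 0 with hc
    set m : Fin n → ℤ := fun i => g i.succ with hmdef
    have hrel : (c : ℝ) + ∑ i, (m i : ℝ) * p i = 0 := by
      rw [Fin.sum_univ_succ] at hsum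
      simpa [zsmul_eq_mul, Fin.cons_zero, Fin.cons_succ] using hsum
    have hm : m ≠ 0 := by
      intro h
      rw [h] at hrel
      simp at hrel
      apply hgi₀
      rcases Fin.eq_zero_or_eq_succ i₀ with h0 | ⟨j, rfl⟩
      · rw [h0]; exact_mod_cast hrel
      · exact congrFun h j
    have hz1 : zval p m = 1 := by
      rw [zval_eq_one_iff]
      exact ⟨-c, by push_cast; linarith⟩
    have hchiS : Set.EqOn (⇑(chi m)) (fun _ => (1 : ℂ))
        {q : G n | ∃ k : ℤ, q = k • pbar p} := by
      rintro q ⟨k, rfl⟩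
      rw [chi_apply_zsmul_pbar, hz1, one_zpow]
    have hall : ⇑(chi m) = fun _ => (1 : ℂ) :=
      Continuous.ext_on hdense (chi m).continuous continuous_const hchiS
    obtain ⟨i, hi⟩ := Function.ne_iff.mp hm
    have hi' : (m i : ℝ) ≠ 0 := Int.cast_ne_zero.mpr hi
    set q₁ : G n := Function.update (0 : G n) i
      (((1 / (2 * (m i : ℝ))) : ℝ) : AddCircle (1 : ℝ)) with hq₁
    have hval : chi m q₁ = -1 := by
      rw [chi_apply, Finset.prod_eq_single i]
      · rw [show q₁ i = (((1 / (2 * (m i : ℝ))) : ℝ) : AddCircle (1 : ℝ)) from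
          Function.update_self _ _ _]
        rw [fourier_coe_apply]
        rw [show 2 * (π : ℂ) * Complex.I * (m i : ℂ)
              * ((1 / (2 * ((m i : ℤ) : ℝ)) : ℝ) : ℂ) / ((1 : ℝ) : ℂ)
            = (π : ℂ) * Complex.I by
              have hmc : ((m i : ℤ) : ℂ) ≠ 0 := by exact_mod_cast hi'
              push_cast
              field_simp]
        exact Complex.exp_pi_mul_I
      · intro j _ hj
        rw [show q₁ j = (0 : AddCircle (1 : ℝ)) from Function.update_of_ne hj _ _]
        exact fourier_eval_zero (m j)
      · simp
    have : (-1 : ℂ) = 1 := by rw [← hval, hall]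
    norm_num at this
  · -- linearly independent → dense
    intro hli
    refine dense_of_forall_sum_not_int p ?_
    rintro m hm ⟨c, hcsum⟩
    apply hm
    have hz := Fintype.linearIndependent_iff.mp hli (Fin.cons (-c) m) ?_
    · funext i
      simpa [Fin.cons_succ] using hz i.succ
    · rw [Fin.sum_univ_succ]
      simp only [Fin.cons_zero, Fin.cons_succ, zsmul_eq_mul]
      push_cast
      rw [hcsum]
      ring
end

section
/- Let a, b, m be integers with b > 0, m > 0 and gcd(a, b) = 1, let p̄ be the image in T² = ℝ²/ℤ² of the point p = (a/b, 1/m) ∈ ℝ², and set c = gcd(m, b). Then the cyclic subgroup {k·p̄ : k ∈ ℤ} is exactly the image in T² of the set {(α/b, β/m) : α, β ∈ ℤ, α ≡ a·β (mod c)}. -/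
lemma coe_eq_coe_iff' (x y : ℝ) :
    (x : AddCircle (1 : ℝ)) = (y : AddCircle (1 : ℝ)) ↔ ∃ n : ℤ, x - y = n := by
  rw [← sub_eq_zero, ← AddCircle.coe_sub, AddCircle.coe_eq_zero_iff]
  simp [zsmul_eq_mul, eq_comm]

lemma zsmul_coe' (k : ℤ) (x : ℝ) :
    k • (x : AddCircle (1:ℝ)) = ((k * x : ℝ) : AddCircle (1:ℝ)) := by
  rw [← AddCircle.coe_zsmul, zsmul_eq_mul]

/-- Let `a, b, m` be integers with `b > 0`, `m > 0`, `gcd(a, b) = 1`, let `p̄`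
be the image in `T² = ℝ²/ℤ²` of `(a/b, 1/m)`, and set `c = gcd(m, b)`. Then the cyclic subgroup
`{k • p̄ : k ∈ ℤ}` is exactly the image in `T²` of
`{(α/b, β/m) : α, β ∈ ℤ, α ≡ a·β (mod c)}`. -/
theorem zmultiples_eq_congruence_lattice
    (a b m : ℤ) (hb : 0 < b) (hm : 0 < m) (hab : Int.gcd a b = 1) :
    {q : AddCircle (1 : ℝ) × AddCircle (1 : ℝ) |
        ∃ k : ℤ, q = k • ((((a : ℝ) / (b : ℝ) : ℝ) : AddCircle (1 : ℝ)),
          (((1 : ℝ) / (m : ℝ) : ℝ) : AddCircle (1 : ℝ)))} =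
      {q : AddCircle (1 : ℝ) × AddCircle (1 : ℝ) |
        ∃ α β : ℤ, α ≡ a * β [ZMOD (Int.gcd m b : ℤ)] ∧
          q = ((((α : ℝ) / (b : ℝ) : ℝ) : AddCircle (1 : ℝ)),
            (((β : ℝ) / (m : ℝ) : ℝ) : AddCircle (1 : ℝ)))} := by
  have hb0 : (b : ℝ) ≠ 0 := Int.cast_ne_zero.mpr hb.ne'
  have hm0 : (m : ℝ) ≠ 0 := Int.cast_ne_zero.mpr hm.ne'
  ext q
  simp only [Set.mem_setOf_eq, Prod.smul_mk, Prod.ext_iff]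
  constructor
  · rintro ⟨k, hk1, hk2⟩
    refine ⟨k * a, k, by rw [mul_comm], ?_, ?_⟩
    · rw [hk1, zsmul_coe', coe_eq_coe_iff']
      exact ⟨0, by push_cast; ring⟩
    · rw [hk2, zsmul_coe', coe_eq_coe_iff']
      exact ⟨0, by push_cast; ring⟩
  · rintro ⟨α, β, hcong, h1, h2⟩
    have hc : (Int.gcd m b : ℤ) ∣ a * β - α := hcong.dvd
    obtain ⟨t, ht⟩ := hc
    have hgcd : Int.gcd (a * m) b = Int.gcd m b := by
      have := Nat.Coprime.gcd_mul_left_cancel m.natAbs (show Nat.Coprime a.natAbs b.natAbs from hab)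
      simpa [Int.gcd, Int.natAbs_mul] using this
    set A := Int.gcdA (a * m) b with hA
    set B := Int.gcdB (a * m) b with hB
    have hbez : (Int.gcd m b : ℤ) = a * m * A + b * B := by
      rw [← hgcd]; exact Int.gcd_eq_gcd_ab (a * m) b
    have key : (α : ℤ) - β * a + m * t * A * a = -(t * B) * b := by
      linear_combination (-1 : ℤ) * ht - t * hbez
    have keyR : (α : ℝ) - (β : ℝ) * a + m * t * A * a = -((t : ℝ) * B) * b := by
      exact_mod_cast congrArg (Int.cast : ℤ → ℝ) key
    refine ⟨β - m * (t * A), ?_, ?_⟩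
    · rw [h1, zsmul_coe', coe_eq_coe_iff']
      refine ⟨-(t * B), ?_⟩
      field_simp
      push_cast
      linear_combination keyR
    · rw [h2, zsmul_coe', coe_eq_coe_iff']
      refine ⟨t * A, ?_⟩
      field_simp
      try push_cast
      try ring
end

section
/- Let n ≥ 1 and let Tⁿ = ℝⁿ/ℤⁿ. Then the union over all positive integers m of the graphs of the multiplication-by-m maps, i.e., the set ⋃_{m ≥ 1} {(q, m·q) : q ∈ Tⁿ}, is dense in Tⁿ × Tⁿ (with the product topology). -/
open AddCircle

private lemma intCast_coe_zero (j : ℤ) : ((j : ℝ) : AddCircle (1:ℝ)) = 0 := by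
  rw [QuotientAddGroup.eq_zero_iff]
  exact ⟨j, by simp⟩

private lemma fract_coe (y : ℝ) : ((Int.fract y : ℝ) : AddCircle (1:ℝ)) = (y : AddCircle (1:ℝ)) := by
  have : (y : AddCircle (1:ℝ)) - ((Int.fract y : ℝ) : AddCircle (1:ℝ))
      = ((⌊y⌋ : ℝ) : AddCircle (1:ℝ)) := by
    rw [← AddCircle.coe_sub]
    congr 1
    rw [Int.fract]; ring
  rw [intCast_coe_zero] at this
  linear_combination (norm := abel) -this

/-- For `n ≥ 1` and `Tⁿ = ℝⁿ/ℤⁿ`, the union over all positive integers `m` of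
the graphs of the multiplication-by-`m` maps is dense in `Tⁿ × Tⁿ`. -/
theorem dense_union_graphs_mul (n : ℕ) (hn : 1 ≤ n) :
    Dense (⋃ m : ℕ, ⋃ (_ : 1 ≤ m),
      {x : (Fin n → AddCircle (1 : ℝ)) × (Fin n → AddCircle (1 : ℝ)) |
        ∃ q : Fin n → AddCircle (1 : ℝ), x = (q, m • q)}) := by
  rw [Metric.dense_iff]
  rintro ⟨a, b⟩ r hr
  -- choose N large
  obtain ⟨N, hN⟩ := exists_nat_gt (2 / r)
  have hN1 : (1 : ℕ) ≤ N := by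
    by_contra h
    push_neg at h
    interval_cases N
    simp at hN
    nlinarith [div_pos (by norm_num : (0:ℝ) < 2) hr]
  have hNpos : (0:ℝ) < N := by exact_mod_cast hN1
  have hNr : 1 / (N : ℝ) < r / 2 := by
    rw [div_lt_div_iff₀ hNpos (by norm_num)]
    have := (div_lt_iff₀ hr).mp hN
    nlinarith
  set m : ℕ := N + 1 with hm
  have hm1 : 1 ≤ m := Nat.le_add_left 1 N
  have hmpos : (0:ℝ) < m := by positivity
  -- lifts of a
  have lift : ∀ c : AddCircle (1:ℝ), ∃ y : ℝ, (y : AddCircle (1:ℝ)) = c :=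
    fun c => QuotientAddGroup.mk_surjective c
  choose xa hxa using fun i => lift (a i)
  -- the rational approximation a'
  set a' : Fin n → AddCircle (1:ℝ) :=
    fun i => (((⌊(N:ℝ) * xa i⌋ : ℝ) / N : ℝ) : AddCircle (1:ℝ)) with ha'
  have hNa' : ∀ i, (N : ℤ) • a' i = ((⌊(N:ℝ) * xa i⌋ : ℝ) : AddCircle (1:ℝ)) := by
    intro i
    rw [ha']
    rw [← AddCircle.coe_zsmul]
    congr 1
    rw [zsmul_eq_mul]; field_simp; push_cast; ring
  have hma' : ∀ i, m • a' i = a' i := by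
    intro i
    have : (m : ℤ) • a' i = (N : ℤ) • a' i + a' i := by
      rw [hm]; push_cast; rw [add_zsmul, one_zsmul]
    rw [← natCast_zsmul, this, hNa', intCast_coe_zero, zero_add]
  have hdista' : ∀ i, dist (a i) (a' i) < 1 / N := by
    intro i
    rw [dist_eq_norm, ← hxa i, ha', ← AddCircle.coe_sub]
    calc ‖((xa i - (⌊(N:ℝ) * xa i⌋ : ℝ) / N : ℝ) : AddCircle (1:ℝ))‖
        ≤ |xa i - (⌊(N:ℝ) * xa i⌋ : ℝ) / N| := QuotientAddGroup.norm_mk_le_norm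
      _ < 1 / N := by
          rw [abs_sub_lt_iff]
          constructor
          · rw [sub_lt_iff_lt_add, ← add_div, lt_div_iff₀ hNpos]
            have := Int.lt_floor_add_one ((N:ℝ) * xa i)
            nlinarith
          · rw [sub_lt_iff_lt_add]
            have := Int.floor_le ((N:ℝ) * xa i)
            have h1 : (⌊(N:ℝ) * xa i⌋ : ℝ) / N ≤ xa i := by
              rw [div_le_iff₀ hNpos]; nlinarith
            nlinarith [one_div_pos.mpr hNpos]
  -- lifts of b - a'
  choose y hy using fun i => lift (b i - a' i)
  set q : Fin n → AddCircle (1:ℝ) :=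
    fun i => a' i + ((Int.fract (y i) / m : ℝ) : AddCircle (1:ℝ)) with hq
  have hmq : m • q = b := by
    funext i
    rw [hq, Pi.smul_apply]
    have : m • (a' i + ((Int.fract (y i) / m : ℝ) : AddCircle (1:ℝ)))
        = m • a' i + m • ((Int.fract (y i) / m : ℝ) : AddCircle (1:ℝ)) := smul_add _ _ _
    rw [this, hma', ← AddCircle.coe_nsmul]
    have hms : m • (Int.fract (y i) / (m:ℝ)) = Int.fract (y i) := by
      rw [nsmul_eq_mul]; field_simp
    rw [hms, fract_coe, hy]
    abel
  have hdistq : ∀ i, dist (q i) (a i) < r := by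
    intro i
    have h1 : dist (q i) (a' i) ≤ 1 / m := by
      rw [hq, dist_eq_norm]
      have : a' i + ((Int.fract (y i) / m : ℝ) : AddCircle (1:ℝ)) - a' i
          = ((Int.fract (y i) / m : ℝ) : AddCircle (1:ℝ)) := by abel
      rw [this]
      calc ‖((Int.fract (y i) / m : ℝ) : AddCircle (1:ℝ))‖
          ≤ |Int.fract (y i) / m| := QuotientAddGroup.norm_mk_le_norm
        _ ≤ 1 / m := by
            rw [abs_div, abs_of_pos hmpos, div_le_div_iff₀ hmpos hmpos]
            have := Int.fract_nonneg (y i)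
            have := Int.fract_lt_one (y i)
            rw [abs_of_nonneg ‹0 ≤ Int.fract (y i)›]
            nlinarith
    have h2 : (1:ℝ) / m < 1 / N := by
      apply div_lt_div_of_pos_left one_pos hNpos
      rw [hm]; push_cast; linarith
    calc dist (q i) (a i) ≤ dist (q i) (a' i) + dist (a' i) (a i) := dist_triangle _ _ _
      _ < 1 / m + 1 / N := by
          have := hdista' i
          rw [dist_comm (a' i) (a i)]
          linarith
      _ < r := by linarith
  refine ⟨(q, m • q), ?_, ?_⟩
  · rw [Metric.mem_ball, Prod.dist_eq, hmq]
    apply max_lt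
    · rw [dist_pi_lt_iff hr]
      exact hdistq
    · rw [dist_pi_lt_iff hr]
      intro i; simpa using hr
  · exact Set.mem_iUnion.mpr ⟨m, Set.mem_iUnion.mpr ⟨hm1, ⟨q, rfl⟩⟩⟩
end

section
/- Let U ⊆ ℂ be a nonempty connected open set, let g, h : ℂ → ℂ be holomorphic on U with Im(g(t)) ≠ 0 for every t ∈ U, and let x, y : ℂ → ℝ be functions satisfying h(t) = x(t) + y(t)·g(t) for all t ∈ U. Suppose there exist real numbers a₁, a₂, a₃ with (a₁, a₂) ≠ (0, 0) such that a₁·x(t) + a₂·y(t) + a₃ = 0 for all t ∈ U. Then x and y are constant on U. -/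
lemma real_valued_holo_const
    (U : Set ℂ) (hU : IsOpen U) (hUconn : IsPreconnected U)
    (f : ℂ → ℂ) (hf : DifferentiableOn ℂ f U)
    (him : ∀ t ∈ U, (f t).im = 0) :
    ∃ c : ℝ, ∀ t ∈ U, f t = (c : ℂ) := by
  have hA : AnalyticOnNhd ℂ f U := hf.analyticOnNhd hU
  rcases hA.is_constant_or_isOpen hUconn with ⟨w, hw⟩ | hopen
  · by_cases hne : U.Nonempty
    · obtain ⟨t₀, ht₀⟩ := hne
      refine ⟨w.re, fun t ht => ?_⟩
      have h1 := hw t ht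
      have h2 : w.im = 0 := by rw [← h1]; exact him t ht
      rw [h1]
      simp [Complex.ext_iff, h2]
    · exact ⟨0, fun t ht => absurd ⟨t, ht⟩ hne⟩
  · by_cases hne : U.Nonempty
    · exfalso
      obtain ⟨t₀, ht₀⟩ := hne
      have hop : IsOpen (f '' U) := hopen U le_rfl hU
      obtain ⟨ε, hε, hball⟩ := Metric.isOpen_iff.mp hop (f t₀) ⟨t₀, ht₀, rfl⟩
      have hmem : f t₀ + Complex.I * (ε/2) ∈ Metric.ball (f t₀) ε := by
        have hd : dist (f t₀ + Complex.I * (ε/2)) (f t₀) = ε/2 := by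
          rw [Complex.dist_eq, add_sub_cancel_left]
          simp [abs_of_pos hε]
        rw [Metric.mem_ball, hd]; linarith
      obtain ⟨t, ht, hft⟩ := hball hmem
      have := him t ht
      rw [hft] at this
      simp [him t₀ ht₀] at this
      linarith
    · exact ⟨0, fun t ht => absurd ⟨t, ht⟩ hne⟩

/-- Let `U ⊆ ℂ` be a nonempty connected open set, `g, h` holomorphic on `U`
with `Im (g t) ≠ 0` on `U`, and `x, y : ℂ → ℝ` with `h t = x t + y t · g t` on `U`. If there
are reals `a₁, a₂, a₃` with `(a₁, a₂) ≠ (0, 0)` and `a₁ x t + a₂ y t + a₃ = 0` on `U`, then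
`x` and `y` are constant on `U`. -/
theorem real_coefficients_constant_of_linear_relation
    (U : Set ℂ) (hU : IsOpen U) (hUne : U.Nonempty) (hUconn : IsPreconnected U)
    (g h : ℂ → ℂ) (hg : DifferentiableOn ℂ g U) (hh : DifferentiableOn ℂ h U)
    (hgim : ∀ t ∈ U, (g t).im ≠ 0)
    (x y : ℂ → ℝ) (hxy : ∀ t ∈ U, h t = (x t : ℂ) + (y t : ℂ) * g t)
    (a₁ a₂ a₃ : ℝ) (ha : (a₁, a₂) ≠ (0, 0))
    (hrel : ∀ t ∈ U, a₁ * x t + a₂ * y t + a₃ = 0) :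
    (∃ cx : ℝ, ∀ t ∈ U, x t = cx) ∧ (∃ cy : ℝ, ∀ t ∈ U, y t = cy) := by
  have hxconst : ∃ cx : ℝ, ∀ t ∈ U, x t = cx := by
    by_cases h2 : a₂ = 0
    · have ha1 : a₁ ≠ 0 := by
        intro h1; exact ha (by simp [h1, h2])
      refine ⟨-a₃ / a₁, fun t ht => ?_⟩
      have hr := hrel t ht
      rw [h2] at hr
      field_simp
      linarith
    · set F : ℂ → ℂ := fun t => ((a₂ : ℂ) * h t + (a₃ : ℂ) * g t) / ((a₂ : ℂ) - (a₁ : ℂ) * g t)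
        with hFdef
      have hden : ∀ t ∈ U, ((a₂ : ℂ) - (a₁ : ℂ) * g t) ≠ 0 := by
        intro t ht hz
        by_cases h1 : a₁ = 0
        · rw [h1] at hz
          simp at hz
          exact h2 hz
        · have him : ((a₂ : ℂ) - (a₁ : ℂ) * g t).im = -(a₁ * (g t).im) := by simp
          rw [hz] at him
          simp at him
          rcases him with h | h
          · exact h1 h
          · exact hgim t ht h
      have hF : DifferentiableOn ℂ F U :=
        DifferentiableOn.div ((hh.const_mul _).add (hg.const_mul _))
          ((differentiableOn_const _).sub (hg.const_mul _)) hden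
      have hFx : ∀ t ∈ U, F t = (x t : ℂ) := by
        intro t ht
        have hx := hxy t ht
        have hrC : (a₁ : ℂ) * (x t : ℂ) + (a₂ : ℂ) * (y t : ℂ) + (a₃ : ℂ) = 0 := by
          exact_mod_cast congrArg (Complex.ofReal) (hrel t ht)
        rw [hFdef]
        simp only
        rw [div_eq_iff (hden t ht)]
        linear_combination (a₂ : ℂ) * hx + (g t) * hrC
      have him : ∀ t ∈ U, (F t).im = 0 := fun t ht => by rw [hFx t ht]; simp
      obtain ⟨c, hc⟩ := real_valued_holo_const U hU hUconn F hF him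
      refine ⟨c, fun t ht => ?_⟩
      have := (hFx t ht).symm.trans (hc t ht)
      exact_mod_cast this
  obtain ⟨cx, hcx⟩ := hxconst
  refine ⟨⟨cx, hcx⟩, ?_⟩
  have hgne : ∀ t ∈ U, g t ≠ 0 := by
    intro t ht h0
    exact hgim t ht (by rw [h0]; rfl)
  set G : ℂ → ℂ := fun t => (h t - (cx : ℂ)) / g t with hGdef
  have hG : DifferentiableOn ℂ G U :=
    DifferentiableOn.div (hh.sub (differentiableOn_const _)) hg hgne
  have hGy : ∀ t ∈ U, G t = (y t : ℂ) := by
    intro t ht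
    have hx := hxy t ht
    rw [hcx t ht] at hx
    rw [hGdef]
    simp only
    rw [div_eq_iff (hgne t ht)]
    linear_combination hx
  have him : ∀ t ∈ U, (G t).im = 0 := fun t ht => by rw [hGy t ht]; simp
  obtain ⟨c, hc⟩ := real_valued_holo_const U hU hUconn G hG him
  refine ⟨c, fun t ht => ?_⟩
  have := (hGy t ht).symm.trans (hc t ht)
  exact_mod_cast this
end

section
/- Let a, e, c be integers with c ≠ 0. Then there exists an integer b such that gcd(a − e·b, c) = gcd(a, e, c), where gcd(a, e, c) denotes the greatest common divisor of the three integers a, e, c. -/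
lemma coprime_case (a e c : ℤ) (hc : c ≠ 0)
    (h : Int.gcd (Int.gcd a e) c = 1) :
    ∃ b : ℤ, Int.gcd (a - e * b) c = 1 := by
  set S := c.natAbs.primeFactors.filter (fun p => ¬ (p ∣ a.natAbs)) with hS
  set B : ℕ := ∏ p ∈ S, p with hB
  refine ⟨(B : ℤ), ?_⟩
  by_contra hne
  obtain ⟨q, hq, hqdvd⟩ := Nat.exists_prime_and_dvd hne
  have hq1 : (q : ℤ) ∣ a - e * B :=
    (Int.natCast_dvd_natCast.mpr hqdvd).trans (Int.gcd_dvd_left _ _)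
  have hq2 : (q : ℤ) ∣ c :=
    (Int.natCast_dvd_natCast.mpr hqdvd).trans (Int.gcd_dvd_right _ _)
  have hqprime : Prime (q : ℤ) := Nat.prime_iff_prime_int.mp hq
  by_cases hqa : (q : ℤ) ∣ a
  · have hqB : ¬ q ∣ B := by
      intro hd
      obtain ⟨p, hpS, hqp⟩ := (hq.prime.dvd_finset_prod_iff _).mp hd
      have hp := Finset.mem_filter.mp hpS
      have hpprime : p.Prime := Nat.prime_of_mem_primeFactors hp.1
      have : q = p := (Nat.prime_dvd_prime_iff_eq hq hpprime).mp hqp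
      exact hp.2 (this ▸ (Int.natCast_dvd.mp hqa))
    have hqe : (q : ℤ) ∣ e := by
      have heB : (q : ℤ) ∣ e * B := by
        have := dvd_sub hqa hq1
        simpa using this
      rcases hqprime.dvd_mul.mp heB with h' | h'
      · exact h'
      · exact absurd (Int.natCast_dvd_natCast.mp (by exact_mod_cast h')) hqB
    have hfin : (q : ℤ) ∣ (Int.gcd (Int.gcd a e) c : ℤ) :=
      Int.dvd_coe_gcd (Int.dvd_coe_gcd hqa hqe) hq2
    rw [h] at hfin
    exact hq.one_lt.ne' (Nat.eq_one_of_dvd_one (Int.natCast_dvd_natCast.mp (by exact_mod_cast hfin)))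
  · have hqS : q ∈ S := Finset.mem_filter.mpr
      ⟨Nat.mem_primeFactors.mpr ⟨hq, Int.natCast_dvd.mp hq2, by simpa using hc⟩,
       fun hd => hqa (Int.natCast_dvd.mpr hd)⟩
    have hqB : (q : ℤ) ∣ (B : ℤ) :=
      Int.natCast_dvd_natCast.mpr (Finset.dvd_prod_of_mem _ hqS)
    exact hqa (by simpa using dvd_add hq1 (Dvd.dvd.mul_left hqB e))

/-- For integers `a, e, c` with `c ≠ 0`, there exists an integer `b` with
`gcd(a − e·b, c) = gcd(a, e, c)`. -/
theorem exists_shift_gcd (a e c : ℤ) (hc : c ≠ 0) :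
    ∃ b : ℤ, Int.gcd (a - e * b) c = Int.gcd (Int.gcd a e) c := by
  set n : ℕ := Int.gcd (Int.gcd a e) c with hn
  set d : ℤ := (n : ℤ) with hd
  have hn0 : n ≠ 0 := by
    simp only [hn, ne_eq, Int.gcd_eq_zero_iff, not_and]
    intro _; exact hc
  have hda : d ∣ a := (Int.gcd_dvd_left _ _).trans (Int.gcd_dvd_left _ _)
  have hde : d ∣ e := (Int.gcd_dvd_left _ _).trans (Int.gcd_dvd_right _ _)
  have hdc : d ∣ c := Int.gcd_dvd_right _ _
  obtain ⟨a', ha⟩ := hda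
  obtain ⟨e', he⟩ := hde
  obtain ⟨c', hcc⟩ := hdc
  have hc' : c' ≠ 0 := fun h0 => hc (by rw [hcc, h0, mul_zero])
  have hmul : ∀ x y : ℤ, Int.gcd (d * x) (d * y) = n * Int.gcd x y := by
    intro x y
    rw [hd, Int.gcd_mul_left, Int.natAbs_natCast]
  have key : n = n * Int.gcd (Int.gcd a' e') c' := by
    conv_lhs => rw [hn, ha, he, hcc]
    rw [Int.gcd_mul_left]
    rw [show ((d.natAbs * Int.gcd a' e' : ℕ) : ℤ) = d * (Int.gcd a' e' : ℤ) by
      push_cast [hd, Int.natAbs_natCast]; ring]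
    exact hmul _ _
  have hgcd1 : Int.gcd (Int.gcd a' e') c' = 1 := by
    have := mul_left_cancel₀ hn0 (key.symm.trans (mul_one n).symm)
    exact this
  obtain ⟨b, hb⟩ := coprime_case a' e' c' hc' hgcd1
  refine ⟨b, ?_⟩
  rw [ha, he, hcc, show d * a' - d * e' * b = d * (a' - e' * b) by ring, hmul, hb, mul_one, hn]
end
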